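/- Let ā = Σ_{i ≠ t} y_i a_i and b̄ = y^T b for some y ∈ ℝ^{n−1}. If (X, x) is feasible for SDP_L (i.e., [[X,x],[x^T,1]] ⪰ 0, diag(X) = x, a_s^T x = b_s, ⟨a_i a_i^T, X⟩ = b_i^2 for i ≠ t), then ⟨ā ā^T, X⟩ = b̄^2 and ⟨a_i ā^T, X⟩ = b_i b̄ for all i ∈ V\{t}. -/

import Mathlib

open Finset Matrix

/-!
For `i ≠ t` the vector `(aᵢ, -bᵢ)` is isotropic for the PSD matrix `Y = [[X, x], [xᵀ, 1]]`:
its quadratic form is `⟨aᵢaᵢᵀ, X⟩ - 2bᵢ aᵢᵀx + bᵢ² = bᵢ² - 2bᵢ² + bᵢ² = 0`, using `aₛᵀx = bₛ` and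
`bᵢ = 0` for `i ∉ {s, t}`. Hence `Y (aᵢ, -bᵢ) = 0`, i.e. `X aᵢ = bᵢ x` and `xᵀaᵢ = bᵢ`. The kernel
of `Y` is a subspace, so it contains `(ā, -b̄)` as well, and both identities follow by evaluating
`X ā = b̄ x` against `ā` and `aᵢ`.
-/

section LiftedMatrix

variable {R n : Type*} [Fintype n]

abbrev liftedMatrix [Zero R] [One R] (X : Matrix n n R) (x : n → R) :
    Matrix (n ⊕ Unit) (n ⊕ Unit) R :=
  fromBlocks X (replicateCol Unit x) (replicateRow Unit x) 1

variable [CommRing R] (X : Matrix n n R) (x u : n → R) (c : R)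

theorem liftedMatrix_mulVec_sumElim :
    liftedMatrix X x *ᵥ Sum.elim u (fun _ => c) =
      Sum.elim (X *ᵥ u + c • x) (fun _ => x ⬝ᵥ u + c) := by
  ext (e | _) <;> simp [mulVec, dotProduct, mul_comm]

theorem sumElim_dotProduct_liftedMatrix_mulVec_sumElim :
    Sum.elim u (fun _ => c) ⬝ᵥ liftedMatrix X x *ᵥ Sum.elim u (fun _ => c) =
      u ⬝ᵥ X *ᵥ u + 2 * c * (x ⬝ᵥ u) + c ^ 2 := by
  rw [liftedMatrix_mulVec_sumElim, sumElim_dotProduct_sumElim, dotProduct_add,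
    dotProduct_smul, dotProduct_comm u x]
  simp only [dotProduct, univ_unique, sum_singleton, smul_eq_mul]
  ring

theorem liftedMatrix_mulVec_sumElim_neg_eq_zero_iff :
    liftedMatrix X x *ᵥ Sum.elim u (fun _ => -c) = 0 ↔ X *ᵥ u = c • x ∧ x ⬝ᵥ u = c := by
  simp only [liftedMatrix_mulVec_sumElim, funext_iff, Sum.forall, Sum.elim_inl, Sum.elim_inr,
    Pi.zero_apply, Pi.sub_apply, Pi.smul_apply, neg_smul, ← sub_eq_add_neg, sub_eq_zero,
    forall_const]

end LiftedMatrix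

theorem liftedMatrix_mulVec_eq_zero {n : Type*} [Fintype n] {X : Matrix n n ℝ} {x : n → ℝ}
    (hY : (liftedMatrix X x).PosSemidef) {u : n → ℝ} {c : ℝ} (hquad : u ⬝ᵥ X *ᵥ u = c ^ 2)
    (hlin : c * (x ⬝ᵥ u) = c ^ 2) :
    liftedMatrix X x *ᵥ Sum.elim u (fun _ => -c) = 0 := by
  refine (hY.dotProduct_mulVec_zero_iff _).1 ?_
  rw [star_trivial, sumElim_dotProduct_liftedMatrix_mulVec_sumElim, hquad]
  linear_combination -2 * hlin

theorem sum_sum_mul_mul_eq_dotProduct_mulVec {R n : Type*} [Fintype n] [CommSemiring R]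
    (X : Matrix n n R) (u w : n → R) :
    ∑ e, ∑ f, u e * w f * X e f = u ⬝ᵥ X *ᵥ w := by
  simp only [dotProduct, mulVec, mul_sum]
  exact sum_congr rfl fun e _ => sum_congr rfl fun f _ => by ring

theorem redundant_squared_linear_constraints_general {V : Type*} [Fintype V] [DecidableEq V]
    (m : ℕ) (s t : V) (a : V → Fin m → ℝ) (b : V → ℝ)
    (hb : ∀ i, b i = if i = s then 1 else if i = t then -1 else 0)
    (y : V → ℝ) (abar : Fin m → ℝ) (bbar : ℝ)
    (habar : ∀ e, abar e = ∑ i ∈ Finset.univ.erase t, y i * a i e)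
    (hbbar : bbar = ∑ i ∈ Finset.univ.erase t, y i * b i)
    (X : Matrix (Fin m) (Fin m) ℝ) (x : Fin m → ℝ)
    (hY : (Matrix.fromBlocks X (Matrix.of fun e (_ : Unit) => x e)
        (Matrix.of fun (_ : Unit) e => x e) 1).PosSemidef)
    (hs : ∑ e, a s e * x e = b s)
    (hsq : ∀ i, i ≠ t → ∑ e, ∑ f, a i e * a i f * X e f = (b i) ^ 2) :
    (∑ e, ∑ f, abar e * abar f * X e f = bbar ^ 2) ∧
    ∀ i, i ≠ t → ∑ e, ∑ f, a i e * abar f * X e f = b i * bbar := by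
  have hlin : ∀ i, i ≠ t → b i * (x ⬝ᵥ a i) = b i ^ 2 := by
    intro i hi
    by_cases his : i = s
    · rw [his, dotProduct_comm, dotProduct, hs, sq]
    · simp [hb i, his, hi]
  have hker : ∀ i, i ≠ t → liftedMatrix X x *ᵥ Sum.elim (a i) (fun _ => -b i) = 0 := fun i hi =>
    liftedMatrix_mulVec_eq_zero hY (by rw [← sum_sum_mul_mul_eq_dotProduct_mulVec, hsq i hi])
      (hlin i hi)
  have hbar : Sum.elim abar (fun _ : Unit => -bbar) =
      ∑ i ∈ univ.erase t, y i • Sum.elim (a i) (fun _ : Unit => -b i) := by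
    ext (e | _) <;> simp [habar, hbbar, Finset.sum_apply]
  obtain ⟨hXabar, hxabar⟩ := (liftedMatrix_mulVec_sumElim_neg_eq_zero_iff X x abar bbar).1 <| by
    rw [hbar, mulVec_sum]
    exact sum_eq_zero fun i hi => by rw [mulVec_smul, hker i (ne_of_mem_erase hi), smul_zero]
  refine ⟨?_, fun i hi => ?_⟩ <;>
    rw [sum_sum_mul_mul_eq_dotProduct_mulVec, hXabar, dotProduct_smul, smul_eq_mul, dotProduct_comm]
  · rw [hxabar, sq]
  · rw [((liftedMatrix_mulVec_sumElim_neg_eq_zero_iff X x (a i) (b i)).1 (hker i hi)).2, mul_comm]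

/-- squared linear constraints induced by a redundant linear constraint
`āᵀx = b̄`, where `ā = ∑_{i ≠ t} yᵢ aᵢ` and `b̄ = yᵀb`, are redundant in `SDP_L`:
any feasible `(X, x)` satisfies `⟨āāᵀ, X⟩ = b̄²` and `⟨aᵢāᵀ, X⟩ = bᵢ b̄` for `i ≠ t`. -/
theorem redundant_squared_linear_constraints {V : Type*} [Fintype V] [DecidableEq V]
    (m : ℕ) (s t : V) (a : V → Fin m → ℝ) (b : V → ℝ)
    (hb : ∀ i, b i = if i = s then 1 else if i = t then -1 else 0)
    (y : V → ℝ) (abar : Fin m → ℝ) (bbar : ℝ)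
    (habar : ∀ e, abar e = ∑ i ∈ Finset.univ.erase t, y i * a i e)
    (hbbar : bbar = ∑ i ∈ Finset.univ.erase t, y i * b i)
    (X : Matrix (Fin m) (Fin m) ℝ) (x : Fin m → ℝ)
    (hY : (Matrix.fromBlocks X (Matrix.of fun e (_ : Unit) => x e)
        (Matrix.of fun (_ : Unit) e => x e) 1).PosSemidef)
    (hdiag : ∀ e, X e e = x e)
    (hs : ∑ e, a s e * x e = b s)
    (hsq : ∀ i, i ≠ t → ∑ e, ∑ f, a i e * a i f * X e f = (b i) ^ 2) :
    (∑ e, ∑ f, abar e * abar f * X e f = bbar ^ 2) ∧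
    ∀ i, i ≠ t → ∑ e, ∑ f, a i e * abar f * X e f = b i * bbar :=
  redundant_squared_linear_constraints_general m s t a b hb y abar bbar habar hbbar X x hY hs hsq
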